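/- arXiv:1205.6937 — 7 statements merged into one kernel-verified Lean document; each statement's English description precedes it below -/
import Mathlib

section
/- Let N^T act on 1-forms over ℝ^4 (coordinates λ_1,λ_2,μ_1,μ_2) diagonally by N^T dλ_k = λ_k dλ_k, N^T dμ_k = λ_k dμ_k (k=1,2). Suppose H_1, H_2 are smooth and there exist smooth functions f, g with dH_2 = f dH_1 + g N^T dH_1. Then H_1 and H_2 are in separable involution: ∂H_1/∂λ_k ∂H_2/∂μ_k − ∂H_1/∂μ_k ∂H_2/∂λ_k = 0 for k = 1,2. -/
noncomputable section

open Real Set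

/-- Partial derivative w.r.t. the 1st argument. -/
def pd1 (F : ℝ → ℝ → ℝ → ℝ → ℝ) (x y z w : ℝ) : ℝ := deriv (fun t => F t y z w) x
/-- Partial derivative w.r.t. the 2nd argument. -/
def pd2 (F : ℝ → ℝ → ℝ → ℝ → ℝ) (x y z w : ℝ) : ℝ := deriv (fun t => F x t z w) y
/-- Partial derivative w.r.t. the 3rd argument. -/
def pd3 (F : ℝ → ℝ → ℝ → ℝ → ℝ) (x y z w : ℝ) : ℝ := deriv (fun t => F x y t w) z
/-- Partial derivative w.r.t. the 4th argument. -/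
def pd4 (F : ℝ → ℝ → ℝ → ℝ → ℝ) (x y z w : ℝ) : ℝ := deriv (fun t => F x y z t) w

/-- Canonical Poisson bracket on ℝ⁴ with coordinates (q₁, q₂, p₁, p₂). -/
def pb (F G : ℝ → ℝ → ℝ → ℝ → ℝ) (x y z w : ℝ) : ℝ :=
  pd1 F x y z w * pd3 G x y z w - pd3 F x y z w * pd1 G x y z w
  + pd2 F x y z w * pd4 G x y z w - pd4 F x y z w * pd2 G x y z w

theorem lenard_chain_implies_separable_involution
    (H1 H2 f g : ℝ → ℝ → ℝ → ℝ → ℝ)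
    (hH1 : ContDiff ℝ (⊤ : ℕ∞) (fun p : ℝ × ℝ × ℝ × ℝ => H1 p.1 p.2.1 p.2.2.1 p.2.2.2))
    (hH2 : ContDiff ℝ (⊤ : ℕ∞) (fun p : ℝ × ℝ × ℝ × ℝ => H2 p.1 p.2.1 p.2.2.1 p.2.2.2))
    (hf : ContDiff ℝ (⊤ : ℕ∞) (fun p : ℝ × ℝ × ℝ × ℝ => f p.1 p.2.1 p.2.2.1 p.2.2.2))
    (hg : ContDiff ℝ (⊤ : ℕ∞) (fun p : ℝ × ℝ × ℝ × ℝ => g p.1 p.2.1 p.2.2.1 p.2.2.2))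
    -- dH₂ = f dH₁ + g Nᵀ dH₁ componentwise, with Nᵀ dλₖ = λₖ dλₖ, Nᵀ dμₖ = λₖ dμₖ
    (hchain : ∀ l1 l2 m1 m2 : ℝ,
      pd1 H2 l1 l2 m1 m2 = (f l1 l2 m1 m2 + g l1 l2 m1 m2 * l1) * pd1 H1 l1 l2 m1 m2 ∧
      pd2 H2 l1 l2 m1 m2 = (f l1 l2 m1 m2 + g l1 l2 m1 m2 * l2) * pd2 H1 l1 l2 m1 m2 ∧
      pd3 H2 l1 l2 m1 m2 = (f l1 l2 m1 m2 + g l1 l2 m1 m2 * l1) * pd3 H1 l1 l2 m1 m2 ∧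
      pd4 H2 l1 l2 m1 m2 = (f l1 l2 m1 m2 + g l1 l2 m1 m2 * l2) * pd4 H1 l1 l2 m1 m2) :
    ∀ l1 l2 m1 m2 : ℝ,
      pd1 H1 l1 l2 m1 m2 * pd3 H2 l1 l2 m1 m2 -
        pd3 H1 l1 l2 m1 m2 * pd1 H2 l1 l2 m1 m2 = 0 ∧
      pd2 H1 l1 l2 m1 m2 * pd4 H2 l1 l2 m1 m2 -
        pd4 H1 l1 l2 m1 m2 * pd2 H2 l1 l2 m1 m2 = 0 := by
  intro l1 l2 m1 m2
  obtain ⟨h1, h2, h3, h4⟩ := hchain l1 l2 m1 m2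
  constructor <;> [rw [h1, h3]; rw [h2, h4]] <;> ring
end
end

section
/- Let H_1, H_2 be smooth on an open set of ℝ^4 (coordinates λ_1,λ_2,μ_1,μ_2) with λ_1 ≠ λ_2, all four partial derivatives ∂H_1/∂λ_k, ∂H_1/∂μ_k nonvanishing, and suppose H_1, H_2 are in separable involution (∂H_1/∂λ_k ∂H_2/∂μ_k − ∂H_1/∂μ_k ∂H_2/∂λ_k = 0, k=1,2). Define f = (λ_2−λ_1)^{-1}(λ_2 (∂H_2/∂λ_1)/(∂H_1/∂λ_1) − λ_1 (∂H_2/∂λ_2)/(∂H_1/∂λ_2)) and g = (λ_2−λ_1)^{-1}(−(∂H_2/∂λ_1)/(∂H_1/∂λ_1) + (∂H_2/∂λ_2)/(∂H_1/∂λ_2)). Then dH_2 = f dH_1 + g N^T dH_1, where N^T dλ_k = λ_k dλ_k, N^T dμ_k = λ_k dμ_k. -/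
noncomputable section

open Real Set

theorem separable_involution_implies_lenard_chain
    (H1 H2 : ℝ → ℝ → ℝ → ℝ → ℝ)
    (hH1 : ContDiff ℝ (⊤ : ℕ∞) (fun p : ℝ × ℝ × ℝ × ℝ => H1 p.1 p.2.1 p.2.2.1 p.2.2.2))
    (hH2 : ContDiff ℝ (⊤ : ℕ∞) (fun p : ℝ × ℝ × ℝ × ℝ => H2 p.1 p.2.1 p.2.2.1 p.2.2.2))
    (l1 l2 m1 m2 : ℝ) (hne : l1 ≠ l2)
    (h1 : pd1 H1 l1 l2 m1 m2 ≠ 0) (h2 : pd2 H1 l1 l2 m1 m2 ≠ 0)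
    (h3 : pd3 H1 l1 l2 m1 m2 ≠ 0) (h4 : pd4 H1 l1 l2 m1 m2 ≠ 0)
    (hsep1 : pd1 H1 l1 l2 m1 m2 * pd3 H2 l1 l2 m1 m2 -
      pd3 H1 l1 l2 m1 m2 * pd1 H2 l1 l2 m1 m2 = 0)
    (hsep2 : pd2 H1 l1 l2 m1 m2 * pd4 H2 l1 l2 m1 m2 -
      pd4 H1 l1 l2 m1 m2 * pd2 H2 l1 l2 m1 m2 = 0) :
    -- with f and g given explicitly, dH₂ = f dH₁ + g Nᵀ dH₁ holds componentwise
    let f : ℝ := (l2 - l1)⁻¹ *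
      (l2 * (pd1 H2 l1 l2 m1 m2 / pd1 H1 l1 l2 m1 m2) -
       l1 * (pd2 H2 l1 l2 m1 m2 / pd2 H1 l1 l2 m1 m2))
    let g : ℝ := (l2 - l1)⁻¹ *
      (-(pd1 H2 l1 l2 m1 m2 / pd1 H1 l1 l2 m1 m2) +
        pd2 H2 l1 l2 m1 m2 / pd2 H1 l1 l2 m1 m2)
    pd1 H2 l1 l2 m1 m2 = (f + g * l1) * pd1 H1 l1 l2 m1 m2 ∧
    pd2 H2 l1 l2 m1 m2 = (f + g * l2) * pd2 H1 l1 l2 m1 m2 ∧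
    pd3 H2 l1 l2 m1 m2 = (f + g * l1) * pd3 H1 l1 l2 m1 m2 ∧
    pd4 H2 l1 l2 m1 m2 = (f + g * l2) * pd4 H1 l1 l2 m1 m2 := by
  intro f g
  have hl : l2 - l1 ≠ 0 := sub_ne_zero.mpr (Ne.symm hne)
  have hf1 : f + g * l1 = pd1 H2 l1 l2 m1 m2 / pd1 H1 l1 l2 m1 m2 := by
    simp only [f, g]; field_simp; ring
  have hf2 : f + g * l2 = pd2 H2 l1 l2 m1 m2 / pd2 H1 l1 l2 m1 m2 := by
    simp only [f, g]; field_simp; ring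
  refine ⟨?_, ?_, ?_, ?_⟩
  · rw [hf1]; field_simp
  · rw [hf2]; field_simp
  · rw [hf1]; field_simp; linarith [hsep1]
  · rw [hf2]; field_simp; linarith [hsep2]
end
end

section
/- Let H = (p_x²+p_y²)/2 + (a/2)(x²+y²) + c_1/x² + c_2/y² (the SWI Hamiltonian), H_cart = p_y²/2 + (a/2)y² + c_2/y², and H_pol = (1/2)(x p_y − y p_x)² + c_1 (y/x)² + c_2 (x/y)². Then on the open set x ≠ 0, y ≠ 0: (i) {H, H_cart} = 0, (ii) {H, H_pol} = 0, where {·,·} is the canonical Poisson bracket on ℝ^4. -/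
noncomputable section

open Real Set

/-- The SWI Hamiltonian. -/
def Hswi (a c1 c2 : ℝ) : ℝ → ℝ → ℝ → ℝ → ℝ := fun x y px py =>
  (px ^ 2 + py ^ 2) / 2 + a / 2 * (x ^ 2 + y ^ 2) + c1 / x ^ 2 + c2 / y ^ 2

/-- The integral inherited from separation in Cartesian coordinates. -/
def Hcart (a c2 : ℝ) : ℝ → ℝ → ℝ → ℝ → ℝ := fun _ y _ py =>
  py ^ 2 / 2 + a / 2 * y ^ 2 + c2 / y ^ 2

/-- The integral inherited from separation in polar coordinates. -/
def Hpol (c1 c2 : ℝ) : ℝ → ℝ → ℝ → ℝ → ℝ := fun x y px py =>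
  (x * py - y * px) ^ 2 / 2 + c1 * (y / x) ^ 2 + c2 * (x / y) ^ 2

/- Auxiliary lemmas computing all needed partial derivatives. -/

lemma pd1_Hswi (a c1 c2 x y px py : ℝ) (hx : x ≠ 0) :
    pd1 (Hswi a c1 c2) x y px py = a * x - 2 * c1 / x ^ 3 := by
  have h : HasDerivAt (fun t : ℝ => (px ^ 2 + py ^ 2) / 2 + a / 2 * (t ^ 2 + y ^ 2) + c1 / t ^ 2 + c2 / y ^ 2)
      (0 + a / 2 * (((2:ℕ) * x ^ 1) + 0) + (0 * x ^ 2 - c1 * ((2:ℕ) * x ^ 1)) / (x ^ 2) ^ 2 + 0) x :=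
    (((hasDerivAt_const x ((px ^ 2 + py ^ 2) / 2)).add
      (((hasDerivAt_pow 2 x).add (hasDerivAt_const x (y ^ 2))).const_mul (a / 2))).add
      ((hasDerivAt_const x c1).div (hasDerivAt_pow 2 x) (pow_ne_zero 2 hx))).add
      (hasDerivAt_const x (c2 / y ^ 2))
  simp only [pd1, Hswi]
  rw [h.deriv]
  field_simp
  ring

lemma pd2_Hswi (a c1 c2 x y px py : ℝ) (hy : y ≠ 0) :
    pd2 (Hswi a c1 c2) x y px py = a * y - 2 * c2 / y ^ 3 := by
  have h : HasDerivAt (fun t : ℝ => (px ^ 2 + py ^ 2) / 2 + a / 2 * (x ^ 2 + t ^ 2) + c1 / x ^ 2 + c2 / t ^ 2)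
      (0 + a / 2 * (0 + ((2:ℕ) * y ^ 1)) + 0 + (0 * y ^ 2 - c2 * ((2:ℕ) * y ^ 1)) / (y ^ 2) ^ 2) y :=
    (((hasDerivAt_const y ((px ^ 2 + py ^ 2) / 2)).add
      (((hasDerivAt_const y (x ^ 2)).add (hasDerivAt_pow 2 y)).const_mul (a / 2))).add
      (hasDerivAt_const y (c1 / x ^ 2))).add
      ((hasDerivAt_const y c2).div (hasDerivAt_pow 2 y) (pow_ne_zero 2 hy))
  simp only [pd2, Hswi]
  rw [h.deriv]
  field_simp
  ring

lemma pd3_Hswi (a c1 c2 x y px py : ℝ) :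
    pd3 (Hswi a c1 c2) x y px py = px := by
  have h : HasDerivAt (fun t : ℝ => (t ^ 2 + py ^ 2) / 2 + a / 2 * (x ^ 2 + y ^ 2) + c1 / x ^ 2 + c2 / y ^ 2)
      ((((2:ℕ) * px ^ 1) + 0) / 2 + 0 + 0 + 0) px :=
    (((((hasDerivAt_pow 2 px).add (hasDerivAt_const px (py ^ 2))).div_const 2).add
      (hasDerivAt_const px (a / 2 * (x ^ 2 + y ^ 2)))).add
      (hasDerivAt_const px (c1 / x ^ 2))).add (hasDerivAt_const px (c2 / y ^ 2))
  simp only [pd3, Hswi]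
  rw [h.deriv]
  push_cast
  ring

lemma pd4_Hswi (a c1 c2 x y px py : ℝ) :
    pd4 (Hswi a c1 c2) x y px py = py := by
  have h : HasDerivAt (fun t : ℝ => (px ^ 2 + t ^ 2) / 2 + a / 2 * (x ^ 2 + y ^ 2) + c1 / x ^ 2 + c2 / y ^ 2)
      ((0 + ((2:ℕ) * py ^ 1)) / 2 + 0 + 0 + 0) py :=
    ((((hasDerivAt_const py (px ^ 2)).add (hasDerivAt_pow 2 py)).div_const 2).add
      (hasDerivAt_const py (a / 2 * (x ^ 2 + y ^ 2)))).add
      (hasDerivAt_const py (c1 / x ^ 2)) |>.add (hasDerivAt_const py (c2 / y ^ 2))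
  simp only [pd4, Hswi]
  rw [h.deriv]
  push_cast
  ring

lemma pd1_Hcart (a c2 x y px py : ℝ) :
    pd1 (Hcart a c2) x y px py = 0 := by
  simp only [pd1, Hcart]
  exact deriv_const x _

lemma pd3_Hcart (a c2 x y px py : ℝ) :
    pd3 (Hcart a c2) x y px py = 0 := by
  simp only [pd3, Hcart]
  exact deriv_const px _

lemma pd2_Hcart (a c2 x y px py : ℝ) (hy : y ≠ 0) :
    pd2 (Hcart a c2) x y px py = a * y - 2 * c2 / y ^ 3 := by
  have h : HasDerivAt (fun t : ℝ => py ^ 2 / 2 + a / 2 * t ^ 2 + c2 / t ^ 2)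
      (0 + a / 2 * ((2:ℕ) * y ^ 1) + (0 * y ^ 2 - c2 * ((2:ℕ) * y ^ 1)) / (y ^ 2) ^ 2) y :=
    ((hasDerivAt_const y (py ^ 2 / 2)).add ((hasDerivAt_pow 2 y).const_mul (a / 2))).add
      ((hasDerivAt_const y c2).div (hasDerivAt_pow 2 y) (pow_ne_zero 2 hy))
  simp only [pd2, Hcart]
  rw [h.deriv]
  field_simp
  ring

lemma pd4_Hcart (a c2 x y px py : ℝ) :
    pd4 (Hcart a c2) x y px py = py := by
  have h : HasDerivAt (fun t : ℝ => t ^ 2 / 2 + a / 2 * y ^ 2 + c2 / y ^ 2)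
      (((2:ℕ) * py ^ 1) / 2 + 0 + 0) py :=
    (((hasDerivAt_pow 2 py).div_const 2).add (hasDerivAt_const py (a / 2 * y ^ 2))).add
      (hasDerivAt_const py (c2 / y ^ 2))
  simp only [pd4, Hcart]
  rw [h.deriv]
  push_cast
  ring

lemma pd1_Hpol (c1 c2 x y px py : ℝ) (hx : x ≠ 0) (hy : y ≠ 0) :
    pd1 (Hpol c1 c2) x y px py
      = (x * py - y * px) * py - 2 * c1 * y ^ 2 / x ^ 3 + 2 * c2 * x / y ^ 2 := by
  have h : HasDerivAt (fun t : ℝ => (t * py - y * px) ^ 2 / 2 + c1 * (y / t) ^ 2 + c2 * (t / y) ^ 2)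
      (((2:ℕ) * (x * py - y * px) ^ 1 * py) / 2
        + c1 * ((2:ℕ) * (y / x) ^ 1 * ((0 * x - y * 1) / x ^ 2))
        + c2 * ((2:ℕ) * (x / y) ^ 1 * (1 / y))) x :=
    (((((hasDerivAt_mul_const py).sub_const (y * px)).pow 2).div_const 2).add
      ((((hasDerivAt_const x y).div (hasDerivAt_id x) hx).pow 2).const_mul c1)).add
      ((((hasDerivAt_id x).div_const y).pow 2).const_mul c2)
  simp only [pd1, Hpol]
  rw [h.deriv]
  field_simp
  ring

lemma pd2_Hpol (c1 c2 x y px py : ℝ) (hx : x ≠ 0) (hy : y ≠ 0) :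
    pd2 (Hpol c1 c2) x y px py
      = -((x * py - y * px) * px) + 2 * c1 * y / x ^ 2 - 2 * c2 * x ^ 2 / y ^ 3 := by
  have h : HasDerivAt (fun t : ℝ => (x * py - t * px) ^ 2 / 2 + c1 * (t / x) ^ 2 + c2 * (x / t) ^ 2)
      (((2:ℕ) * (x * py - y * px) ^ 1 * (0 - px)) / 2
        + c1 * ((2:ℕ) * (y / x) ^ 1 * (1 / x))
        + c2 * ((2:ℕ) * (x / y) ^ 1 * ((0 * y - x * 1) / y ^ 2))) y :=
    (((((hasDerivAt_const y (x * py)).sub (hasDerivAt_mul_const px)).pow 2).div_const 2).add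
      ((((hasDerivAt_id y).div_const x).pow 2).const_mul c1)).add
      ((((hasDerivAt_const y x).div (hasDerivAt_id y) hy).pow 2).const_mul c2)
  simp only [pd2, Hpol]
  rw [h.deriv]
  field_simp
  ring

lemma pd3_Hpol (c1 c2 x y px py : ℝ) :
    pd3 (Hpol c1 c2) x y px py = -((x * py - y * px) * y) := by
  have h : HasDerivAt (fun t : ℝ => (x * py - y * t) ^ 2 / 2 + c1 * (y / x) ^ 2 + c2 * (x / y) ^ 2)
      (((2:ℕ) * (x * py - y * px) ^ 1 * (0 - y * 1)) / 2 + 0 + 0) px :=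
    ((((((hasDerivAt_const px (x * py)).sub ((hasDerivAt_id px).const_mul y)).pow 2).div_const 2)).add
      (hasDerivAt_const px (c1 * (y / x) ^ 2))).add (hasDerivAt_const px (c2 * (x / y) ^ 2))
  simp only [pd3, Hpol]
  rw [h.deriv]
  push_cast
  ring

lemma pd4_Hpol (c1 c2 x y px py : ℝ) :
    pd4 (Hpol c1 c2) x y px py = (x * py - y * px) * x := by
  have h : HasDerivAt (fun t : ℝ => (x * t - y * px) ^ 2 / 2 + c1 * (y / x) ^ 2 + c2 * (x / y) ^ 2)
      (((2:ℕ) * (x * py - y * px) ^ 1 * (x * 1)) / 2 + 0 + 0) py :=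
    (((((hasDerivAt_id py).const_mul x).sub_const (y * px)).pow 2).div_const 2).add
      (hasDerivAt_const py (c1 * (y / x) ^ 2)) |>.add (hasDerivAt_const py (c2 * (x / y) ^ 2))
  simp only [pd4, Hpol]
  rw [h.deriv]
  push_cast
  ring

theorem SWI_superintegrable (a c1 c2 : ℝ) :
    ∀ x y px py : ℝ, x ≠ 0 → y ≠ 0 →
      pb (Hswi a c1 c2) (Hcart a c2) x y px py = 0 ∧
      pb (Hswi a c1 c2) (Hpol c1 c2) x y px py = 0 := by
  intro x y px py hx hy
  constructor
  · rw [pb, pd1_Hswi a c1 c2 x y px py hx, pd2_Hswi a c1 c2 x y px py hy,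
      pd3_Hswi, pd4_Hswi, pd1_Hcart, pd2_Hcart a c2 x y px py hy, pd3_Hcart, pd4_Hcart]
    ring
  · rw [pb, pd1_Hswi a c1 c2 x y px py hx, pd2_Hswi a c1 c2 x y px py hy,
      pd3_Hswi, pd4_Hswi, pd1_Hpol c1 c2 x y px py hx hy, pd2_Hpol c1 c2 x y px py hx hy,
      pd3_Hpol, pd4_Hpol]
    field_simp
    ring
end
end

section
/- The differentials of the three functions H = (p_x²+p_y²)/2 + (a/2)(x²+y²) + c_1/x² + c_2/y², H_cart = p_y²/2 + (a/2)y² + c_2/y², and H_pol = (1/2)(x p_y − y p_x)² + c_1(y/x)² + c_2(x/y)² are linearly independent at a generic point of {x ≠ 0, y ≠ 0} (e.g. at any point where p_x, p_y, x p_y − y p_x are suitably generic), so the SWI system is superintegrable with 3 = 2·2 − 1 independent integrals. -/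
noncomputable section

open Real Set

private lemma fderiv_dir {f : ℝ × ℝ × ℝ × ℝ → ℝ} {p w : ℝ × ℝ × ℝ × ℝ}
    (hf : DifferentiableAt ℝ f p) {c : ℝ}
    (h : HasDerivAt (fun t : ℝ => f (p + t • w)) c 0) : fderiv ℝ f p w = c := by
  have hline : HasDerivAt (fun t : ℝ => p + t • w) w 0 := by
    simpa using ((hasDerivAt_id (0 : ℝ)).smul_const w).const_add p
  have hF : HasFDerivAt f (fderiv ℝ f p) (p + (0 : ℝ) • w) := by
    simpa using hf.hasFDerivAt
  have h2 : HasDerivAt (fun t : ℝ => f (p + t • w)) (fderiv ℝ f p w) 0 :=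
    hF.comp_hasDerivAt 0 hline
  exact h2.unique h ▸ rfl

private lemma aux (a c1 c2 v : ℝ) (hv0 : v ≠ 0)
    (hQ : (v - 1) * (a - 2 * c1 + v) + 2 * c2 - 2 * c1 ≠ 0) :
    LinearIndependent ℝ
      ![fderiv ℝ (fun q : ℝ × ℝ × ℝ × ℝ =>
          (q.2.2.1 ^ 2 + q.2.2.2 ^ 2) / 2 + a / 2 * (q.1 ^ 2 + q.2.1 ^ 2) +
            c1 / q.1 ^ 2 + c2 / q.2.1 ^ 2) ((1 : ℝ), (1 : ℝ), (1 : ℝ), v),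
        fderiv ℝ (fun q : ℝ × ℝ × ℝ × ℝ =>
          q.2.2.2 ^ 2 / 2 + a / 2 * q.2.1 ^ 2 + c2 / q.2.1 ^ 2) ((1 : ℝ), (1 : ℝ), (1 : ℝ), v),
        fderiv ℝ (fun q : ℝ × ℝ × ℝ × ℝ =>
          (q.1 * q.2.2.2 - q.2.1 * q.2.2.1) ^ 2 / 2 + c1 * (q.2.1 / q.1) ^ 2 +
            c2 * (q.1 / q.2.1) ^ 2) ((1 : ℝ), (1 : ℝ), (1 : ℝ), v)] := by
  have hid : HasDerivAt (fun t : ℝ => (1 : ℝ) + t) 1 0 := by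
    simpa using (hasDerivAt_id (0 : ℝ)).const_add 1
  have hv : HasDerivAt (fun t : ℝ => v + t) 1 0 := by
    simpa using (hasDerivAt_id (0 : ℝ)).const_add v
  set F1 : ℝ × ℝ × ℝ × ℝ → ℝ := fun q =>
    (q.2.2.1 ^ 2 + q.2.2.2 ^ 2) / 2 + a / 2 * (q.1 ^ 2 + q.2.1 ^ 2) +
      c1 / q.1 ^ 2 + c2 / q.2.1 ^ 2 with hF1
  set F2 : ℝ × ℝ × ℝ × ℝ → ℝ := fun q =>
    q.2.2.2 ^ 2 / 2 + a / 2 * q.2.1 ^ 2 + c2 / q.2.1 ^ 2 with hF2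
  set F3 : ℝ × ℝ × ℝ × ℝ → ℝ := fun q =>
    (q.1 * q.2.2.2 - q.2.1 * q.2.2.1) ^ 2 / 2 + c1 * (q.2.1 / q.1) ^ 2 +
      c2 * (q.1 / q.2.1) ^ 2 with hF3
  -- the 12 directional derivatives
  have e1x : fderiv ℝ F1 ((1 : ℝ), (1 : ℝ), (1 : ℝ), v) (1, 0, 0, 0) = a - 2 * c1 := by
    apply fderiv_dir (by rw [hF1]; fun_prop (disch := norm_num))
    simp only [hF1, Prod.mk_add_mk, Prod.smul_mk, smul_eq_mul, mul_one, mul_zero, one_mul,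
      add_zero]
    have h := (((hasDerivAt_const (0:ℝ) (((1:ℝ)^2+v^2)/2)).add
        (((hid.pow 2).add (hasDerivAt_const (0:ℝ) ((1:ℝ)^2))).const_mul (a/2))).add
        ((hasDerivAt_const (0:ℝ) c1).div (hid.pow 2) (by norm_num))).add
        (hasDerivAt_const (0:ℝ) (c2/1^2))
    refine h.congr_deriv ?_
    push_cast
    norm_num [Pi.pow_apply]
    ring
  have e1y : fderiv ℝ F1 ((1 : ℝ), (1 : ℝ), (1 : ℝ), v) (0, 1, 0, 0) = a - 2 * c2 := by
    apply fderiv_dir (by rw [hF1]; fun_prop (disch := norm_num))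
    simp only [hF1, Prod.mk_add_mk, Prod.smul_mk, smul_eq_mul, mul_one, mul_zero, one_mul,
      add_zero]
    have h := (((hasDerivAt_const (0:ℝ) (((1:ℝ)^2+v^2)/2)).add
        (((hasDerivAt_const (0:ℝ) ((1:ℝ)^2)).add (hid.pow 2)).const_mul (a/2))).add
        (hasDerivAt_const (0:ℝ) (c1/1^2))).add
        ((hasDerivAt_const (0:ℝ) c2).div (hid.pow 2) (by norm_num))
    refine h.congr_deriv ?_
    push_cast
    norm_num [Pi.pow_apply]
    ring
  have e1px : fderiv ℝ F1 ((1 : ℝ), (1 : ℝ), (1 : ℝ), v) (0, 0, 1, 0) = 1 := by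
    apply fderiv_dir (by rw [hF1]; fun_prop (disch := norm_num))
    simp only [hF1, Prod.mk_add_mk, Prod.smul_mk, smul_eq_mul, mul_one, mul_zero, one_mul,
      add_zero]
    have h := ((((hid.pow 2).add (hasDerivAt_const (0:ℝ) (v^2))).div_const 2).add
        (hasDerivAt_const (0:ℝ) (a/2*((1:ℝ)^2+1^2)))).add
        (hasDerivAt_const (0:ℝ) (c1/1^2)) |>.add (hasDerivAt_const (0:ℝ) (c2/1^2))
    refine h.congr_deriv ?_
    push_cast
    norm_num [Pi.pow_apply]
  have e1py : fderiv ℝ F1 ((1 : ℝ), (1 : ℝ), (1 : ℝ), v) (0, 0, 0, 1) = v := by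
    apply fderiv_dir (by rw [hF1]; fun_prop (disch := norm_num))
    simp only [hF1, Prod.mk_add_mk, Prod.smul_mk, smul_eq_mul, mul_one, mul_zero, one_mul,
      add_zero]
    have h := ((((hasDerivAt_const (0:ℝ) ((1:ℝ)^2)).add (hv.pow 2)).div_const 2).add
        (hasDerivAt_const (0:ℝ) (a/2*((1:ℝ)^2+1^2)))).add
        (hasDerivAt_const (0:ℝ) (c1/1^2)) |>.add (hasDerivAt_const (0:ℝ) (c2/1^2))
    refine h.congr_deriv ?_
    push_cast
    norm_num [Pi.pow_apply]
  have e2x : fderiv ℝ F2 ((1 : ℝ), (1 : ℝ), (1 : ℝ), v) (1, 0, 0, 0) = 0 := by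
    apply fderiv_dir (by rw [hF2]; fun_prop (disch := norm_num))
    simp only [hF2, Prod.mk_add_mk, Prod.smul_mk, smul_eq_mul, mul_one, mul_zero, one_mul,
      add_zero]
    exact hasDerivAt_const (0:ℝ) (v^2/2 + a/2*(1:ℝ)^2 + c2/1^2)
  have e2y : fderiv ℝ F2 ((1 : ℝ), (1 : ℝ), (1 : ℝ), v) (0, 1, 0, 0) = a - 2 * c2 := by
    apply fderiv_dir (by rw [hF2]; fun_prop (disch := norm_num))
    simp only [hF2, Prod.mk_add_mk, Prod.smul_mk, smul_eq_mul, mul_one, mul_zero, one_mul,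
      add_zero]
    have h := ((hasDerivAt_const (0:ℝ) (v^2/2)).add ((hid.pow 2).const_mul (a/2))).add
        ((hasDerivAt_const (0:ℝ) c2).div (hid.pow 2) (by norm_num))
    refine h.congr_deriv ?_
    push_cast
    norm_num [Pi.pow_apply]
    ring
  have e2px : fderiv ℝ F2 ((1 : ℝ), (1 : ℝ), (1 : ℝ), v) (0, 0, 1, 0) = 0 := by
    apply fderiv_dir (by rw [hF2]; fun_prop (disch := norm_num))
    simp only [hF2, Prod.mk_add_mk, Prod.smul_mk, smul_eq_mul, mul_one, mul_zero, one_mul,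
      add_zero]
    exact hasDerivAt_const (0:ℝ) (v^2/2 + a/2*(1:ℝ)^2 + c2/1^2)
  have e2py : fderiv ℝ F2 ((1 : ℝ), (1 : ℝ), (1 : ℝ), v) (0, 0, 0, 1) = v := by
    apply fderiv_dir (by rw [hF2]; fun_prop (disch := norm_num))
    simp only [hF2, Prod.mk_add_mk, Prod.smul_mk, smul_eq_mul, mul_one, mul_zero, one_mul,
      add_zero]
    have h := (((hv.pow 2).div_const 2).add (hasDerivAt_const (0:ℝ) (a/2*(1:ℝ)^2))).add
        (hasDerivAt_const (0:ℝ) (c2/1^2))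
    refine h.congr_deriv ?_
    push_cast
    norm_num [Pi.pow_apply]
  have e3x : fderiv ℝ F3 ((1 : ℝ), (1 : ℝ), (1 : ℝ), v) (1, 0, 0, 0)
      = (v - 1) * v + 2 * c2 - 2 * c1 := by
    apply fderiv_dir (by rw [hF3]; simp only [div_eq_mul_inv]; fun_prop (disch := norm_num))
    simp only [hF3, Prod.mk_add_mk, Prod.smul_mk, smul_eq_mul, mul_one, mul_zero, one_mul,
      add_zero]
    have h := (((((hid.mul_const v).sub_const 1).pow 2).div_const 2).add
        ((((hasDerivAt_const (0:ℝ) (1:ℝ)).div hid (by norm_num)).pow 2).const_mul c1)).add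
        (((hid.div_const 1).pow 2).const_mul c2)
    refine h.congr_deriv ?_
    push_cast
    norm_num [Pi.pow_apply]
    ring
  have e3y : fderiv ℝ F3 ((1 : ℝ), (1 : ℝ), (1 : ℝ), v) (0, 1, 0, 0)
      = -(v - 1) + 2 * c1 - 2 * c2 := by
    apply fderiv_dir (by rw [hF3]; simp only [div_eq_mul_inv]; fun_prop (disch := norm_num))
    simp only [hF3, Prod.mk_add_mk, Prod.smul_mk, smul_eq_mul, mul_one, mul_zero, one_mul,
      add_zero]
    have h := ((((hid.const_sub v).pow 2).div_const 2).add
        (((hid.div_const 1).pow 2).const_mul c1)).add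
        ((((hasDerivAt_const (0:ℝ) (1:ℝ)).div hid (by norm_num)).pow 2).const_mul c2)
    refine h.congr_deriv ?_
    push_cast
    norm_num [Pi.pow_apply]
    ring
  have e3px : fderiv ℝ F3 ((1 : ℝ), (1 : ℝ), (1 : ℝ), v) (0, 0, 1, 0) = -(v - 1) := by
    apply fderiv_dir (by rw [hF3]; simp only [div_eq_mul_inv]; fun_prop (disch := norm_num))
    simp only [hF3, Prod.mk_add_mk, Prod.smul_mk, smul_eq_mul, mul_one, mul_zero, one_mul,
      add_zero]
    have h := ((((hid.const_sub v).pow 2).div_const 2).add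
        (hasDerivAt_const (0:ℝ) (c1*((1:ℝ)/1)^2))).add
        (hasDerivAt_const (0:ℝ) (c2*((1:ℝ)/1)^2))
    refine h.congr_deriv ?_
    push_cast
    norm_num [Pi.pow_apply]
    ring
  have e3py : fderiv ℝ F3 ((1 : ℝ), (1 : ℝ), (1 : ℝ), v) (0, 0, 0, 1) = v - 1 := by
    apply fderiv_dir (by rw [hF3]; simp only [div_eq_mul_inv]; fun_prop (disch := norm_num))
    simp only [hF3, Prod.mk_add_mk, Prod.smul_mk, smul_eq_mul, mul_one, mul_zero, one_mul,
      add_zero]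
    have h := ((((hv.sub_const 1).pow 2).div_const 2).add
        (hasDerivAt_const (0:ℝ) (c1*((1:ℝ)/1)^2))).add
        (hasDerivAt_const (0:ℝ) (c2*((1:ℝ)/1)^2))
    refine h.congr_deriv ?_
    push_cast
    norm_num [Pi.pow_apply]
  rw [Fintype.linearIndependent_iff]
  intro g hg
  rw [Fin.sum_univ_three] at hg
  simp only [Matrix.cons_val_zero, Matrix.cons_val_one, Matrix.head_cons, Matrix.cons_val_two,
    Matrix.tail_cons] at hg
  have hx := congrArg (fun L : (ℝ × ℝ × ℝ × ℝ) →L[ℝ] ℝ => L (1, 0, 0, 0)) hg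
  have hpx := congrArg (fun L : (ℝ × ℝ × ℝ × ℝ) →L[ℝ] ℝ => L (0, 0, 1, 0)) hg
  have hpy := congrArg (fun L : (ℝ × ℝ × ℝ × ℝ) →L[ℝ] ℝ => L (0, 0, 0, 1)) hg
  simp only [ContinuousLinearMap.add_apply, ContinuousLinearMap.coe_smul', Pi.smul_apply,
    smul_eq_mul, ContinuousLinearMap.zero_apply, e1x, e2x, e3x, e1px, e2px, e3px,
    e1py, e2py, e3py] at hx hpx hpy
  have h2 : g 2 * ((v - 1) * (a - 2 * c1 + v) + 2 * c2 - 2 * c1) = 0 := by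
    linear_combination hx - (a - 2 * c1) * hpx
  have hg2 : g 2 = 0 := by
    rcases mul_eq_zero.mp h2 with h | h
    · exact h
    · exact absurd h hQ
  have hg0 : g 0 = 0 := by linear_combination hpx + (v - 1) * hg2
  have hg1 : g 1 = 0 := by
    have h1v : g 1 * v = 0 := by linear_combination hpy - v * hg0 - (v - 1) * hg2
    rcases mul_eq_zero.mp h1v with h | h
    · exact h
    · exact absurd h hv0
  intro i
  fin_cases i
  · exact hg0
  · exact hg1
  · exact hg2

theorem SWI_integrals_independent (a c1 c2 : ℝ) :
    ∃ p : ℝ × ℝ × ℝ × ℝ, p.1 ≠ 0 ∧ p.2.1 ≠ 0 ∧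
      LinearIndependent ℝ
        ![fderiv ℝ (fun q : ℝ × ℝ × ℝ × ℝ =>
            (q.2.2.1 ^ 2 + q.2.2.2 ^ 2) / 2 + a / 2 * (q.1 ^ 2 + q.2.1 ^ 2) +
              c1 / q.1 ^ 2 + c2 / q.2.1 ^ 2) p,
          fderiv ℝ (fun q : ℝ × ℝ × ℝ × ℝ =>
            q.2.2.2 ^ 2 / 2 + a / 2 * q.2.1 ^ 2 + c2 / q.2.1 ^ 2) p,
          fderiv ℝ (fun q : ℝ × ℝ × ℝ × ℝ =>
            (q.1 * q.2.2.2 - q.2.1 * q.2.2.1) ^ 2 / 2 + c1 * (q.2.1 / q.1) ^ 2 +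
              c2 * (q.1 / q.2.1) ^ 2) p] := by
  by_cases h2 : ((2:ℝ) - 1) * (a - 2 * c1 + 2) + 2 * c2 - 2 * c1 ≠ 0
  · exact ⟨((1 : ℝ), (1 : ℝ), (1 : ℝ), (2 : ℝ)), one_ne_zero, one_ne_zero,
      aux a c1 c2 2 (by norm_num) h2⟩
  · push_neg at h2
    by_cases h3 : ((3:ℝ) - 1) * (a - 2 * c1 + 3) + 2 * c2 - 2 * c1 ≠ 0
    · exact ⟨((1 : ℝ), (1 : ℝ), (1 : ℝ), (3 : ℝ)), one_ne_zero, one_ne_zero,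
        aux a c1 c2 3 (by norm_num) h3⟩
    · push_neg at h3
      refine ⟨((1 : ℝ), (1 : ℝ), (1 : ℝ), (4 : ℝ)), one_ne_zero, one_ne_zero,
        aux a c1 c2 4 (by norm_num) ?_⟩
      intro h4
      nlinarith [h2, h3, h4]
end
end

section
/- Let V_1, V_2 be differentiable functions on ℝ, and on the open set ξ² + η² > 0 define h = (1/(ξ²+η²))((p_ξ²+p_η²)/2 + V_1(ξ) + V_2(η)) and k = (1/(ξ²+η²))((η² p_ξ² − ξ² p_η²)/2 + η² V_1(ξ) − ξ² V_2(η)). Then {h,k} = 0 for the canonical Poisson bracket in coordinates (ξ,η,p_ξ,p_η). -/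
noncomputable section

open Real Set

theorem parabolic_separated_bracket_vanishes
    (V1 V2 : ℝ → ℝ) (hV1 : Differentiable ℝ V1) (hV2 : Differentiable ℝ V2) :
    ∀ ξ η pξ pη : ℝ, 0 < ξ ^ 2 + η ^ 2 →
      pb (fun ξ η pξ pη =>
            (1 / (ξ ^ 2 + η ^ 2)) * ((pξ ^ 2 + pη ^ 2) / 2 + V1 ξ + V2 η))
         (fun ξ η pξ pη =>
            (1 / (ξ ^ 2 + η ^ 2)) *
              ((η ^ 2 * pξ ^ 2 - ξ ^ 2 * pη ^ 2) / 2 + η ^ 2 * V1 ξ - ξ ^ 2 * V2 η))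
         ξ η pξ pη = 0 := by
  intro ξ η pξ pη hD
  have hDne : ξ ^ 2 + η ^ 2 ≠ 0 := ne_of_gt hD
  set D : ℝ := ξ ^ 2 + η ^ 2 with hDdef
  set v1 : ℝ := deriv V1 ξ
  set v2 : ℝ := deriv V2 η
  -- derivatives of the denominators
  have hd1 : HasDerivAt (fun t : ℝ => t ^ 2 + η ^ 2) (2 * ξ) ξ := by
    simpa using (hasDerivAt_pow 2 ξ).add_const (η ^ 2)
  have hd2 : HasDerivAt (fun t : ℝ => ξ ^ 2 + t ^ 2) (2 * η) η := by
    simpa using ((hasDerivAt_pow 2 η).const_add (ξ ^ 2))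
  have hinv1 : HasDerivAt (fun t : ℝ => (t ^ 2 + η ^ 2)⁻¹) (-(2 * ξ) / D ^ 2) ξ :=
    hd1.inv hDne
  have hinv2 : HasDerivAt (fun t : ℝ => (ξ ^ 2 + t ^ 2)⁻¹) (-(2 * η) / D ^ 2) η :=
    hd2.inv hDne
  -- first function, derivative in ξ
  have hA1 : HasDerivAt (fun t : ℝ => (pξ ^ 2 + pη ^ 2) / 2 + V1 t + V2 η) v1 ξ := by
    exact (((hV1 ξ).hasDerivAt.const_add ((pξ ^ 2 + pη ^ 2) / 2)).add_const (V2 η))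
  have H1 : HasDerivAt (fun t : ℝ => (1 / (t ^ 2 + η ^ 2)) * ((pξ ^ 2 + pη ^ 2) / 2 + V1 t + V2 η))
      (-(2 * ξ) / D ^ 2 * ((pξ ^ 2 + pη ^ 2) / 2 + V1 ξ + V2 η) + D⁻¹ * v1) ξ := by
    simp only [one_div]; exact hinv1.mul hA1
  -- first function, derivative in η
  have hA2 : HasDerivAt (fun t : ℝ => (pξ ^ 2 + pη ^ 2) / 2 + V1 ξ + V2 t) v2 η := by
    exact ((hV2 η).hasDerivAt.const_add ((pξ ^ 2 + pη ^ 2) / 2 + V1 ξ))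
  have H2 : HasDerivAt (fun t : ℝ => (1 / (ξ ^ 2 + t ^ 2)) * ((pξ ^ 2 + pη ^ 2) / 2 + V1 ξ + V2 t))
      (-(2 * η) / D ^ 2 * ((pξ ^ 2 + pη ^ 2) / 2 + V1 ξ + V2 η) + D⁻¹ * v2) η := by
    simp only [one_div]; exact hinv2.mul hA2
  -- first function, momentum derivatives
  have H3 : HasDerivAt (fun t : ℝ => (1 / D) * ((t ^ 2 + pη ^ 2) / 2 + V1 ξ + V2 η))
      ((1 / D) * pξ) pξ := by
    have : HasDerivAt (fun t : ℝ => (t ^ 2 + pη ^ 2) / 2 + V1 ξ + V2 η) pξ pξ := by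
      have h0 : HasDerivAt (fun t : ℝ => t ^ 2) (2 * pξ) pξ := by simpa using hasDerivAt_pow 2 pξ
      simpa [mul_comm] using (((h0.add_const (pη ^ 2)).div_const 2).add_const (V1 ξ)).add_const (V2 η)
    simpa using this.const_mul (1 / D)
  have H4 : HasDerivAt (fun t : ℝ => (1 / D) * ((pξ ^ 2 + t ^ 2) / 2 + V1 ξ + V2 η))
      ((1 / D) * pη) pη := by
    have : HasDerivAt (fun t : ℝ => (pξ ^ 2 + t ^ 2) / 2 + V1 ξ + V2 η) pη pη := by
      have h0 : HasDerivAt (fun t : ℝ => t ^ 2) (2 * pη) pη := by simpa using hasDerivAt_pow 2 pη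
      simpa [mul_comm] using (((h0.const_add (pξ ^ 2)).div_const 2).add_const (V1 ξ)).add_const (V2 η)
    simpa using this.const_mul (1 / D)
  -- second function, derivative in ξ
  have hB1 : HasDerivAt (fun t : ℝ => (η ^ 2 * pξ ^ 2 - t ^ 2 * pη ^ 2) / 2 + η ^ 2 * V1 t - t ^ 2 * V2 η)
      ((-(2 * ξ * pη ^ 2)) / 2 + η ^ 2 * v1 - 2 * ξ * V2 η) ξ := by
    have hp : HasDerivAt (fun t : ℝ => t ^ 2) (2 * ξ) ξ := by simpa using hasDerivAt_pow 2 ξ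
    have h1 : HasDerivAt (fun t : ℝ => (η ^ 2 * pξ ^ 2 - t ^ 2 * pη ^ 2) / 2)
        ((-(2 * ξ * pη ^ 2)) / 2) ξ := by
      have := ((hp.mul_const (pη ^ 2)).const_sub (η ^ 2 * pξ ^ 2)).div_const 2
      simpa [mul_comm, mul_assoc, neg_div] using this
    have h2 : HasDerivAt (fun t : ℝ => η ^ 2 * V1 t) (η ^ 2 * v1) ξ :=
      ((hV1 ξ).hasDerivAt.const_mul (η ^ 2))
    have h3 : HasDerivAt (fun t : ℝ => t ^ 2 * V2 η) (2 * ξ * V2 η) ξ := by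
      simpa [mul_assoc] using hp.mul_const (V2 η)
    exact (h1.add h2).sub h3
  have K1 : HasDerivAt (fun t : ℝ => (1 / (t ^ 2 + η ^ 2)) *
        ((η ^ 2 * pξ ^ 2 - t ^ 2 * pη ^ 2) / 2 + η ^ 2 * V1 t - t ^ 2 * V2 η))
      (-(2 * ξ) / D ^ 2 * ((η ^ 2 * pξ ^ 2 - ξ ^ 2 * pη ^ 2) / 2 + η ^ 2 * V1 ξ - ξ ^ 2 * V2 η)
        + D⁻¹ * ((-(2 * ξ * pη ^ 2)) / 2 + η ^ 2 * v1 - 2 * ξ * V2 η)) ξ := by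
    simp only [one_div]; exact hinv1.mul hB1
  -- second function, derivative in η
  have hB2 : HasDerivAt (fun t : ℝ => (t ^ 2 * pξ ^ 2 - ξ ^ 2 * pη ^ 2) / 2 + t ^ 2 * V1 ξ - ξ ^ 2 * V2 t)
      ((2 * η * pξ ^ 2) / 2 + 2 * η * V1 ξ - ξ ^ 2 * v2) η := by
    have hp : HasDerivAt (fun t : ℝ => t ^ 2) (2 * η) η := by simpa using hasDerivAt_pow 2 η
    have h1 : HasDerivAt (fun t : ℝ => (t ^ 2 * pξ ^ 2 - ξ ^ 2 * pη ^ 2) / 2)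
        ((2 * η * pξ ^ 2) / 2) η := by
      have := ((hp.mul_const (pξ ^ 2)).sub_const (ξ ^ 2 * pη ^ 2)).div_const 2
      simpa [mul_assoc] using this
    have h2 : HasDerivAt (fun t : ℝ => t ^ 2 * V1 ξ) (2 * η * V1 ξ) η := by
      simpa [mul_assoc] using hp.mul_const (V1 ξ)
    have h3 : HasDerivAt (fun t : ℝ => ξ ^ 2 * V2 t) (ξ ^ 2 * v2) η :=
      ((hV2 η).hasDerivAt.const_mul (ξ ^ 2))
    exact (h1.add h2).sub h3
  have K2 : HasDerivAt (fun t : ℝ => (1 / (ξ ^ 2 + t ^ 2)) *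
        ((t ^ 2 * pξ ^ 2 - ξ ^ 2 * pη ^ 2) / 2 + t ^ 2 * V1 ξ - ξ ^ 2 * V2 t))
      (-(2 * η) / D ^ 2 * ((η ^ 2 * pξ ^ 2 - ξ ^ 2 * pη ^ 2) / 2 + η ^ 2 * V1 ξ - ξ ^ 2 * V2 η)
        + D⁻¹ * ((2 * η * pξ ^ 2) / 2 + 2 * η * V1 ξ - ξ ^ 2 * v2)) η := by
    simp only [one_div]; exact hinv2.mul hB2
  -- second function, momentum derivatives
  have K3 : HasDerivAt (fun t : ℝ => (1 / D) *
        ((η ^ 2 * t ^ 2 - ξ ^ 2 * pη ^ 2) / 2 + η ^ 2 * V1 ξ - ξ ^ 2 * V2 η))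
      ((1 / D) * (η ^ 2 * pξ)) pξ := by
    have hp : HasDerivAt (fun t : ℝ => t ^ 2) (2 * pξ) pξ := by simpa using hasDerivAt_pow 2 pξ
    have h1 : HasDerivAt (fun t : ℝ => (η ^ 2 * t ^ 2 - ξ ^ 2 * pη ^ 2) / 2 + η ^ 2 * V1 ξ - ξ ^ 2 * V2 η)
        (η ^ 2 * pξ) pξ := by
      have := ((((hp.const_mul (η ^ 2)).sub_const (ξ ^ 2 * pη ^ 2)).div_const 2).add_const
        (η ^ 2 * V1 ξ)).sub_const (ξ ^ 2 * V2 η)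
      have e : η ^ 2 * (2 * pξ) / 2 = η ^ 2 * pξ := by ring
      simpa [e] using this
    simpa using h1.const_mul (1 / D)
  have K4 : HasDerivAt (fun t : ℝ => (1 / D) *
        ((η ^ 2 * pξ ^ 2 - ξ ^ 2 * t ^ 2) / 2 + η ^ 2 * V1 ξ - ξ ^ 2 * V2 η))
      ((1 / D) * (-(ξ ^ 2 * pη))) pη := by
    have hp : HasDerivAt (fun t : ℝ => t ^ 2) (2 * pη) pη := by simpa using hasDerivAt_pow 2 pη
    have h1 : HasDerivAt (fun t : ℝ => (η ^ 2 * pξ ^ 2 - ξ ^ 2 * t ^ 2) / 2 + η ^ 2 * V1 ξ - ξ ^ 2 * V2 η)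
        (-(ξ ^ 2 * pη)) pη := by
      have := ((((hp.const_mul (ξ ^ 2)).const_sub (η ^ 2 * pξ ^ 2)).div_const 2).add_const
        (η ^ 2 * V1 ξ)).sub_const (ξ ^ 2 * V2 η)
      have e : -(ξ ^ 2 * (2 * pη)) / 2 = -(ξ ^ 2 * pη) := by ring
      simpa [e] using this
    simpa using h1.const_mul (1 / D)
  -- assemble
  simp only [pb, pd1, pd2, pd3, pd4]
  rw [H1.deriv, H2.deriv, H3.deriv, H4.deriv, K1.deriv, K2.deriv, K3.deriv, K4.deriv]
  field_simp
  ring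
end
end

section
/- Let g : ℝ^4 → ℝ be continuous and V : ℝ² → ℝ twice continuously differentiable, such that (y − x)·g(x,y,p_x,p_y)·V_{xy}(x,y) = 0 for all (x,y,p_x,p_y), and g is nowhere zero. Then V_{xy} = 0 on ℝ², and hence there exist C¹ functions V_1, V_2 : ℝ → ℝ with V(x,y) = V_1(x) + V_2(y). -/
noncomputable section

open Real Set

/-- The mixed second partial ∂²V/∂y∂x. -/
def Vxy (V : ℝ → ℝ → ℝ) (x y : ℝ) : ℝ :=
  deriv (fun t => deriv (fun s => V s t) x) y

theorem nontrivial_chain_forces_cartesian_separation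
    (g : ℝ → ℝ → ℝ → ℝ → ℝ)
    (hg_cont : Continuous (fun p : ℝ × ℝ × ℝ × ℝ => g p.1 p.2.1 p.2.2.1 p.2.2.2))
    (hg_ne : ∀ x y px py : ℝ, g x y px py ≠ 0)
    (V : ℝ → ℝ → ℝ) (hV : ContDiff ℝ 2 (fun p : ℝ × ℝ => V p.1 p.2))
    (hclosure : ∀ x y px py : ℝ, (y - x) * g x y px py * Vxy V x y = 0) :
    (∀ x y : ℝ, Vxy V x y = 0) ∧
    ∃ V1 V2 : ℝ → ℝ, ContDiff ℝ 1 V1 ∧ ContDiff ℝ 1 V2 ∧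
      ∀ x y : ℝ, V x y = V1 x + V2 y := by
  set F : ℝ × ℝ → ℝ := fun p => V p.1 p.2 with hFdef
  have hF : ContDiff ℝ 2 F := hV
  have hFd : Differentiable ℝ F := hF.differentiable (by norm_num)
  set G : ℝ × ℝ → ℝ := fun p => fderiv ℝ F p (1, 0) with hGdef
  have hG : ContDiff ℝ 1 G := by
    exact (hF.fderiv_right (by norm_num)).clm_apply contDiff_const
  have hGd : Differentiable ℝ G := hG.differentiable one_ne_zero
  have key1 : ∀ x t : ℝ, HasDerivAt (fun s => V s t) (G (x, t)) x := by
    intro x t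
    have h1 : HasDerivAt (fun s : ℝ => (s, t)) ((1 : ℝ), (0 : ℝ)) x :=
      (hasDerivAt_id x).prodMk (hasDerivAt_const x t)
    have := ((hFd (x, t)).hasFDerivAt).comp_hasDerivAt x h1
    exact this
  have key2 : ∀ x y : ℝ, HasDerivAt (fun t => G (x, t)) (fderiv ℝ G (x, y) (0, 1)) y := by
    intro x y
    have h1 : HasDerivAt (fun t : ℝ => (x, t)) ((0 : ℝ), (1 : ℝ)) y :=
      (hasDerivAt_const y x).prodMk (hasDerivAt_id y)
    exact ((hGd (x, y)).hasFDerivAt).comp_hasDerivAt y h1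
  have hvxy : ∀ x y : ℝ, Vxy V x y = fderiv ℝ G (x, y) (0, 1) := by
    intro x y
    have h1 : (fun t => deriv (fun s => V s t) x) = fun t => G (x, t) := by
      funext t; exact (key1 x t).deriv
    rw [Vxy, h1, (key2 x y).deriv]
  have hcont : Continuous fun p : ℝ × ℝ => fderiv ℝ G p (0, 1) :=
    (hG.continuous_fderiv one_ne_zero).clm_apply continuous_const
  have hzero : ∀ x y : ℝ, Vxy V x y = 0 := by
    intro x y
    have hne : ∀ t : ℝ, t ≠ x → Vxy V x t = 0 := by
      intro t ht
      have := hclosure x t 0 0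
      have h2 : (t - x) * g x t 0 0 ≠ 0 :=
        mul_ne_zero (sub_ne_zero.mpr ht) (hg_ne x t 0 0)
      exact (mul_eq_zero.mp this).resolve_left h2
    have hc : Continuous fun t : ℝ => Vxy V x t := by
      have : (fun t : ℝ => Vxy V x t) = fun t => fderiv ℝ G (x, t) (0, 1) := by
        funext t; exact hvxy x t
      rw [this]
      exact hcont.comp (continuous_const.prodMk continuous_id)
    have := Continuous.ext_on (dense_compl_singleton x) hc continuous_const
      (fun t ht => hne t ht)
    exact congrFun this y
  refine ⟨hzero, fun x => V x 0, fun y => V 0 y - V 0 0, ?_, ?_, ?_⟩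
  · exact (hV.comp (contDiff_id.prodMk contDiff_const)).of_le (by norm_num)
  · exact ((hV.comp (contDiff_const.prodMk contDiff_id)).of_le (by norm_num)).sub
      contDiff_const
  · intro x y
    -- G is constant in the second variable
    have hGc : ∀ a b : ℝ, G (a, b) = G (a, 0) := by
      intro a b
      have hd : Differentiable ℝ fun t : ℝ => G (a, t) :=
        fun t => (key2 a t).differentiableAt
      have hz : ∀ t : ℝ, deriv (fun t : ℝ => G (a, t)) t = 0 := by
        intro t
        rw [(key2 a t).deriv, ← hvxy a t]
        exact hzero a t
      exact is_const_of_deriv_eq_zero hd hz b 0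
    have hW : Differentiable ℝ fun s : ℝ => V s y - V s 0 :=
      fun s => ((key1 s y).sub (key1 s 0)).differentiableAt
    have hWz : ∀ s : ℝ, deriv (fun s : ℝ => V s y - V s 0) s = 0 := by
      intro s
      rw [((key1 s y).fun_sub (key1 s 0)).deriv, hGc s y]
      ring
    have := is_const_of_deriv_eq_zero hW hWz x 0
    show V x y = V x 0 + (V 0 y - V 0 0)
    linarith
end
end

section
/- Let V : (0,∞) × ℝ → ℝ be twice continuously differentiable and satisfy V_{rθ} + (2/r)V_θ = 0 everywhere. Then there exist C¹ functions V_1 (of r) and V_2 (of θ) such that V(r,θ) = V_1(r) + V_2(θ)/r². -/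
noncomputable section

open Real Set

/-- ∂V/∂θ. -/
def Vtheta (V : ℝ → ℝ → ℝ) (r θ : ℝ) : ℝ := deriv (fun t => V r t) θ

/-- The mixed second partial ∂²V/∂r∂θ. -/
def Vrtheta (V : ℝ → ℝ → ℝ) (r θ : ℝ) : ℝ := deriv (fun s => Vtheta V s θ) r

theorem polar_separability_PDE
    (V : ℝ → ℝ → ℝ)
    (hV : ContDiffOn ℝ 2 (fun p : ℝ × ℝ => V p.1 p.2) (Ioi 0 ×ˢ univ))
    (hpde : ∀ r θ : ℝ, 0 < r → Vrtheta V r θ + 2 / r * Vtheta V r θ = 0) :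
    ∃ V1 V2 : ℝ → ℝ, ContDiffOn ℝ 1 V1 (Ioi 0) ∧ ContDiff ℝ 1 V2 ∧
      ∀ r θ : ℝ, 0 < r → V r θ = V1 r + V2 θ / r ^ 2 := by
  set F : ℝ × ℝ → ℝ := fun p => V p.1 p.2 with hFdef
  set S : Set (ℝ × ℝ) := Ioi 0 ×ˢ (univ : Set ℝ) with hSdef
  have hSopen : IsOpen S := isOpen_Ioi.prod isOpen_univ
  have hmem : ∀ {r θ : ℝ}, 0 < r → ((r, θ) : ℝ × ℝ) ∈ S := fun hr => ⟨hr, mem_univ _⟩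
  set G : ℝ × ℝ → ℝ := fun p => fderiv ℝ F p (0, 1) with hGdef
  have hGc : ContDiffOn ℝ 1 G S :=
    (hV.fderiv_of_isOpen hSopen (by norm_num)).clm_apply contDiffOn_const
  have hFd : ∀ {p : ℝ × ℝ}, p ∈ S → DifferentiableAt ℝ F p := fun {p} hp =>
    (hV.differentiableOn (by norm_num)).differentiableAt (hSopen.mem_nhds hp)
  -- slice derivative in θ
  have hslice : ∀ r θ : ℝ, 0 < r → HasDerivAt (fun t => V r t) (G (r, θ)) θ := by
    intro r θ hr
    have := (hFd (hmem hr)).hasFDerivAt.comp_hasDerivAt θ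
      ((hasDerivAt_const θ r).prodMk (hasDerivAt_id θ))
    exact this
  have hVtheta : ∀ r θ : ℝ, 0 < r → Vtheta V r θ = G (r, θ) := fun r θ hr =>
    (hslice r θ hr).deriv
  -- derivative in r of Vtheta
  have hGd : ∀ {p : ℝ × ℝ}, p ∈ S → DifferentiableAt ℝ G p := fun {p} hp =>
    (hGc.differentiableOn one_ne_zero).differentiableAt (hSopen.mem_nhds hp)
  have hrd : ∀ r θ : ℝ, 0 < r → HasDerivAt (fun s => Vtheta V s θ) (Vrtheta V r θ) r := by
    intro r θ hr
    have hev : (fun s => Vtheta V s θ) =ᶠ[nhds r] fun s => G (s, θ) := by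
      filter_upwards [Ioi_mem_nhds hr] with s hs
      exact hVtheta s θ hs
    have hline : DifferentiableAt ℝ (fun s : ℝ => (s, θ)) r :=
      differentiableAt_id.prodMk (differentiableAt_const θ)
    have hGslice : DifferentiableAt ℝ (fun s => G (s, θ)) r :=
      DifferentiableAt.comp (f := fun s : ℝ => (s, θ)) r (hGd (hmem hr)) hline
    have hdiff : DifferentiableAt ℝ (fun s => Vtheta V s θ) r :=
      (hev.differentiableAt_iff).mpr hGslice
    exact hdiff.hasDerivAt
  -- r² Vθ is constant in r
  have key : ∀ r θ : ℝ, 0 < r → r ^ 2 * Vtheta V r θ = Vtheta V 1 θ := by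
    intro r θ hr
    set f : ℝ → ℝ := fun s => s ^ 2 * Vtheta V s θ with hfdef
    have hf0 : ∀ s ∈ Ioi (0:ℝ), HasDerivAt f 0 s := by
      intro s hs
      have hs' : (0:ℝ) < s := hs
      have h1 : HasDerivAt f ((↑2 * s ^ (2-1)) * Vtheta V s θ + s ^ 2 * Vrtheta V s θ) s :=
        (hasDerivAt_pow 2 s).mul (hrd s θ hs')
      have : (↑2 * s ^ (2-1)) * Vtheta V s θ + s ^ 2 * Vrtheta V s θ
          = s ^ 2 * (Vrtheta V s θ + 2 / s * Vtheta V s θ) := by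
        field_simp
        ring
      rw [this, hpde s θ hs', mul_zero] at h1
      exact h1
    have hconst : f r = f 1 := by
      refine (convex_Ioi (0:ℝ)).is_const_of_fderivWithin_eq_zero
        (fun s hs => ((hf0 s hs).differentiableAt).differentiableWithinAt) ?_ hr (by norm_num)
      intro s hs
      rw [fderivWithin_of_isOpen isOpen_Ioi hs]
      have : HasFDerivAt f ((1 : ℝ →L[ℝ] ℝ).smulRight (0:ℝ)) s := (hf0 s hs).hasFDerivAt
      rw [this.fderiv]
      ext; simp
    have h2 : r ^ 2 * Vtheta V r θ = 1 ^ 2 * Vtheta V 1 θ := hconst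
    simpa using h2
  have hF1 : ContDiffOn ℝ 1 F S := hV.of_le one_le_two
  -- separate variables
  refine ⟨fun r => V r 0 - V 1 0 / r ^ 2, fun θ => V 1 θ, ?_, ?_, ?_⟩
  · have h1 : ContDiffOn ℝ 1 (fun r : ℝ => V r 0) (Ioi 0) :=
      hF1.comp (g := F) (f := fun r : ℝ => (r, (0:ℝ)))
        ((contDiff_id.prodMk contDiff_const).contDiffOn)
        (fun r hr => hmem hr)
    exact h1.sub (contDiffOn_const.div ((contDiff_id.pow 2).contDiffOn)
      (fun r hr => pow_ne_zero 2 (ne_of_gt hr)))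
  · rw [← contDiffOn_univ]
    exact hF1.comp (g := F) (f := fun θ : ℝ => ((1:ℝ), θ))
      ((contDiff_const.prodMk contDiff_id).contDiffOn)
      (fun θ _ => hmem one_pos)
  · intro r θ hr
    set φ : ℝ → ℝ := fun t => V r t - V 1 t / r ^ 2 with hφdef
    have hφ0 : ∀ t : ℝ, HasDerivAt φ 0 t := by
      intro t
      have h1 := (hslice r t hr).sub ((hslice 1 t one_pos).div_const (r ^ 2))
      have heq : G (r, t) - G (1, t) / r ^ 2 = 0 := by
        have k1 := key r t hr
        rw [hVtheta r t hr, hVtheta 1 t one_pos] at k1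
        field_simp at k1 ⊢
        linarith
      rwa [heq] at h1
    have := is_const_of_deriv_eq_zero (fun t => (hφ0 t).differentiableAt)
      (fun t => (hφ0 t).deriv) θ 0
    have hφeq : V r θ - V 1 θ / r ^ 2 = V r 0 - V 1 0 / r ^ 2 := this
    linarith [hφeq]
end
end
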